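/- Let $U$, $Z_1$, $Z_2$ be mutually independent random variables taking values in standard Borel spaces, with $Z_1$ and $Z_2$ equal in distribution. If $f$ is a measurable map into a standard Borel space such that $f(U, Z_1) = f(U, Z_2)$ almost surely, then there exists a measurable map $h$ such that $f(U, Z_1) = h(U)$ almost surely. -/

import Mathlib

/-!
Since `Z₂` is independent of `(U, Z₁)`, the law of `(Z₂, (U, Z₁))` is the product of the laws.
By Fubini, `f (U, Z₁) = f (U, z)` almost surely for almost every value `z` of `Z₂`; fixing one
such `z` gives `h = f (·, z)`.
-/

open MeasureTheory MeasurableSpace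

section

variable {Ω α β : Type*} [MeasurableSpace Ω] [MeasurableSpace α] [MeasurableSpace β]
  {μ : Measure Ω} [IsProbabilityMeasure μ] {X : Ω → α} {Y : Ω → β}

theorem map_prodMk_eq_prod_of_measure_inter_eq_mul (hX : Measurable X) (hY : Measurable Y)
    {C : Set (Set β)} (hgen : ‹MeasurableSpace β› = generateFrom C) (hC : IsPiSystem C)
    (hmul : ∀ s, MeasurableSet s → ∀ t ∈ C,
      μ (X ⁻¹' s ∩ Y ⁻¹' t) = μ (X ⁻¹' s) * μ (Y ⁻¹' t)) :
    μ.map (fun ω => (X ω, Y ω)) = (μ.map X).prod (μ.map Y) := by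
  refine (Measure.prod_eq fun s t hs ht => ?_).symm
  have hrestrict : (μ.restrict (X ⁻¹' s)).map Y = μ (X ⁻¹' s) • μ.map Y := by
    refine ext_of_generate_finite C hgen hC (fun t ht => ?_) ?_
    · have htm : MeasurableSet t := hgen ▸ measurableSet_generateFrom ht
      rw [Measure.map_apply hY htm, Measure.restrict_apply (hY htm), Set.inter_comm,
        hmul s hs t ht, Measure.smul_apply, Measure.map_apply hY htm, smul_eq_mul]
    · simp [Measure.map_apply hY MeasurableSet.univ]
  rw [Measure.map_apply (hX.prodMk hY) (hs.prod ht), Measure.map_apply hX hs,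
    Set.mk_preimage_prod, Set.inter_comm, ← Measure.restrict_apply (hY ht),
    ← Measure.map_apply hY ht, hrestrict, Measure.smul_apply, smul_eq_mul]

end

theorem exists_measurable_reduction_general
    {Ω α β γ : Type*} [MeasurableSpace Ω]
    [MeasurableSpace α]
    [MeasurableSpace β]
    [MeasurableSpace γ] [StandardBorelSpace γ]
    (μ : Measure Ω) [IsProbabilityMeasure μ]
    (U : Ω → α) (Z₁ Z₂ : Ω → β) (f : α → β → γ)
    (hU : Measurable U) (hZ₁ : Measurable Z₁) (hZ₂ : Measurable Z₂)
    (hf : Measurable (Function.uncurry f))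
    (hindep : ∀ (A : Set α) (B C : Set β), MeasurableSet A → MeasurableSet B →
      MeasurableSet C →
      μ (U ⁻¹' A ∩ Z₁ ⁻¹' B ∩ Z₂ ⁻¹' C) = μ (U ⁻¹' A) * μ (Z₁ ⁻¹' B) * μ (Z₂ ⁻¹' C))
    (heq : ∀ᵐ ω ∂μ, f (U ω) (Z₁ ω) = f (U ω) (Z₂ ω)) :
    ∃ h : α → γ, Measurable h ∧ ∀ᵐ ω ∂μ, f (U ω) (Z₁ ω) = h (U ω) := by
  have hUZ₁ : Measurable fun ω => (U ω, Z₁ ω) := hU.prodMk hZ₁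
  have hlaw : μ.map (fun ω => (Z₂ ω, (U ω, Z₁ ω)))
      = (μ.map Z₂).prod (μ.map fun ω => (U ω, Z₁ ω)) := by
    refine map_prodMk_eq_prod_of_measure_inter_eq_mul hZ₂ hUZ₁ generateFrom_prod.symm
      isPiSystem_prod ?_
    rintro C hC _ ⟨A, hA, B, hB, rfl⟩
    have hpair := hindep A B Set.univ hA hB MeasurableSet.univ
    simp only [Set.preimage_univ, Set.inter_univ, measure_univ, mul_one] at hpair
    rw [Set.mk_preimage_prod, Set.inter_comm, hindep A B C hA hB hC, hpair, mul_comm]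
  have hprod : ∀ᵐ q ∂(μ.map Z₂).prod (μ.map fun ω => (U ω, Z₁ ω)),
      f q.2.1 q.2.2 = f q.2.1 q.1 := by
    have hmeas : MeasurableSet {q : β × α × β | f q.2.1 q.2.2 = f q.2.1 q.1} :=
      measurableSet_eq_fun (hf.comp measurable_snd)
        (hf.comp (measurable_snd.fst.prodMk measurable_fst))
    rw [← hlaw, ae_map_iff (hZ₂.prodMk hUZ₁).aemeasurable hmeas]
    exact heq
  have : IsProbabilityMeasure (μ.map Z₂) := Measure.isProbabilityMeasure_map hZ₂.aemeasurable
  obtain ⟨z, hz⟩ := (Measure.ae_ae_of_ae_prod hprod).exists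
  exact ⟨fun u => f u z, hf.comp (measurable_id.prodMk measurable_const),
    ae_of_ae_map hUZ₁.aemeasurable hz⟩

/-- **Reduction of functional dependence.** If `U, Z₁, Z₂` are mutually independent
random variables taking values in standard Borel spaces, `Z₁` and `Z₂` are equal in
distribution, and `f (U, Z₁) = f (U, Z₂)` almost surely for a measurable map `f` into a
standard Borel space, then there is a measurable map `h` with `f (U, Z₁) = h U` a.s. -/
theorem exists_measurable_reduction
    {Ω α β γ : Type*} [MeasurableSpace Ω]
    [MeasurableSpace α] [StandardBorelSpace α]
    [MeasurableSpace β] [StandardBorelSpace β]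
    [MeasurableSpace γ] [StandardBorelSpace γ]
    (μ : Measure Ω) [IsProbabilityMeasure μ]
    (U : Ω → α) (Z₁ Z₂ : Ω → β) (f : α → β → γ)
    (hU : Measurable U) (hZ₁ : Measurable Z₁) (hZ₂ : Measurable Z₂)
    (hf : Measurable (Function.uncurry f))
    (hindep : ∀ (A : Set α) (B C : Set β), MeasurableSet A → MeasurableSet B →
      MeasurableSet C →
      μ (U ⁻¹' A ∩ Z₁ ⁻¹' B ∩ Z₂ ⁻¹' C) = μ (U ⁻¹' A) * μ (Z₁ ⁻¹' B) * μ (Z₂ ⁻¹' C))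
    (hdist : Measure.map Z₁ μ = Measure.map Z₂ μ)
    (heq : ∀ᵐ ω ∂μ, f (U ω) (Z₁ ω) = f (U ω) (Z₂ ω)) :
    ∃ h : α → γ, Measurable h ∧ ∀ᵐ ω ∂μ, f (U ω) (Z₁ ω) = h (U ω) :=
  exists_measurable_reduction_general μ U Z₁ Z₂ f hU hZ₁ hZ₂ hf hindep heq
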